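/- The invariant ζ_k is multiplicative under orthogonal sum: if (A, χ) and (A', χ') are bicharacter pairs, then ζ_k(χ ⊕ χ') = ζ_k(χ)·ζ_k(χ') for every integer k ≥ 1, where χ ⊕ χ' is the orthogonal sum form on A × A'. -/

import Mathlib

/-- A bicharacter on a finite abelian group: a non-degenerate symmetric bilinear pairing
with values in the unit circle `S¹ ⊂ ℂ`; non-degeneracy means the adjoint map
`A → Hom(A, S¹)` is bijective. -/
def IsBicharacter {A : Type*} [AddCommGroup A] [Fintype A] (χ : A → A → ℂ) : Prop :=
  (∀ a b, ‖χ a b‖ = 1) ∧ (∀ a b, χ a b = χ b a) ∧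
  (∀ a b c, χ (a + b) c = χ a c * χ b c) ∧
  Function.Injective (fun a : A => (fun b => χ a b)) ∧
  (∀ f : A → ℂ, (∀ a, ‖f a‖ = 1) → (∀ a b, f (a + b) = f a * f b) →
    ∃ a : A, f = fun b => χ a b)

/-- The set `Q_χ` of quadratic maps associated with `χ`. -/
def QuadMaps {A : Type*} [AddCommGroup A] [Fintype A] (χ : A → A → ℂ) : Set (A → ℂ) :=
  {μ | (∀ a, ‖μ a‖ = 1) ∧ ∀ a b, μ (a + b) = χ a b * μ a * μ b}

/-- The normalized Gauss sum `γ(μ) = |A|^{-1/2} ∑_a μ a` of a quadratic map associated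
with a non-degenerate form (whose annihilator is trivial). -/
noncomputable def gaussSum' {A : Type*} [AddCommGroup A] [Fintype A] (μ : A → ℂ) : ℂ :=
  ((Real.sqrt (Fintype.card A) : ℂ))⁻¹ * ∑ a : A, μ a

/-- `ζ_k(χ) = |A|^{-1/2} |A_k|^{-1/2} ∑_{μ ∈ Q_χ} γ(μ)^k`, where `A_k = {a | k·a = 0}`. -/
noncomputable def zeta {A : Type*} [AddCommGroup A] [Fintype A]
    (χ : A → A → ℂ) (k : ℕ) : ℂ :=
  ((Real.sqrt (Fintype.card A) : ℂ))⁻¹ *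
    ((Real.sqrt (Nat.card {a : A // k • a = 0}) : ℂ))⁻¹ *
    ∑ᶠ μ ∈ QuadMaps χ, (gaussSum' μ) ^ k

/-
Restricting a quadratic map of `χ ⊕ χ'` to the two axes of `A × A'` gives quadratic maps of
`χ` and `χ'` whose product recovers it, so `(μ, μ') ↦ μ ⊗ μ'` is a bijection
`Q_χ × Q_χ' ≃ Q_{χ ⊕ χ'}`. Gauss sums, `|A|^{-1/2}` and `|A_k|^{-1/2}` are all multiplicative
along this decomposition, so the defining sum of `ζ_k(χ ⊕ χ')` factors.
-/

lemma inv_sqrt_natCast_mul (m n : ℕ) :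
    ((Real.sqrt ((m * n : ℕ) : ℝ) : ℂ))⁻¹ =
      ((Real.sqrt m : ℂ))⁻¹ * ((Real.sqrt n : ℂ))⁻¹ := by
  rw [Nat.cast_mul, Real.sqrt_mul (Nat.cast_nonneg m), Complex.ofReal_mul, mul_inv]

lemma finsum_mem_prod_mul {α β R : Type*} [CommSemiring R] {s : Set α} {t : Set β}
    (hs : s.Finite) (ht : t.Finite) (f : α → R) (g : β → R) :
    ∑ᶠ p ∈ s ×ˢ t, f p.1 * g p.2 = (∑ᶠ a ∈ s, f a) * ∑ᶠ b ∈ t, g b := by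
  rw [finsum_mem_eq_finite_toFinset_sum _ (hs.prod ht), finsum_mem_eq_finite_toFinset_sum _ hs,
    finsum_mem_eq_finite_toFinset_sum _ ht, ← Set.Finite.toFinset_prod hs ht,
    Finset.sum_product, Finset.sum_mul_sum]

namespace IsBicharacter

variable {A : Type*} [AddCommGroup A] [Fintype A] {χ : A → A → ℂ}

lemma ne_zero (hχ : IsBicharacter χ) (a b : A) : χ a b ≠ 0 :=
  norm_ne_zero_iff.mp (by simp [hχ.1 a b])

lemma map_zero_left (hχ : IsBicharacter χ) (b : A) : χ 0 b = 1 :=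
  (mul_eq_left₀ (hχ.ne_zero 0 b)).mp (by simpa using (hχ.2.2.1 0 0 b).symm)

lemma map_zero_right (hχ : IsBicharacter χ) (a : A) : χ a 0 = 1 :=
  hχ.2.1 a 0 ▸ hχ.map_zero_left a

/-- Two quadratic maps of `χ` differ by a unitary character, which non-degeneracy writes as
`χ c`. -/
lemma quadMaps_subset_range (hχ : IsBicharacter χ) {μ₀ : A → ℂ} (hμ₀ : μ₀ ∈ QuadMaps χ) :
    QuadMaps χ ⊆ Set.range fun c a => χ c a * μ₀ a := by
  intro μ hμ
  have hμ₀_ne (a : A) : μ₀ a ≠ 0 := norm_ne_zero_iff.mp (by simp [hμ₀.1 a])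
  obtain ⟨c, hc⟩ := hχ.2.2.2.2 (fun a => μ a / μ₀ a)
    (fun a => by simp [hμ.1 a, hμ₀.1 a])
    (fun a b => by
      have := hχ.ne_zero a b
      have := hμ₀_ne a
      have := hμ₀_ne b
      rw [hμ.2, hμ₀.2]
      field_simp)
  refine ⟨c, funext fun a => ?_⟩
  simp only [← congrFun hc a, div_mul_cancel₀ _ (hμ₀_ne a)]

lemma quadMaps_finite (hχ : IsBicharacter χ) : (QuadMaps χ).Finite := by
  obtain h | ⟨μ₀, hμ₀⟩ := (QuadMaps χ).eq_empty_or_nonempty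
  · exact h ▸ Set.finite_empty
  · exact (Set.finite_range _).subset (hχ.quadMaps_subset_range hμ₀)

end IsBicharacter

lemma QuadMaps.apply_zero {A : Type*} [AddCommGroup A] [Fintype A] {χ : A → A → ℂ}
    (hχ : χ 0 0 = 1) {μ : A → ℂ} (hμ : μ ∈ QuadMaps χ) : μ 0 = 1 :=
  (mul_eq_left₀ (norm_ne_zero_iff.mp (by simp [hμ.1 0] : ‖μ 0‖ ≠ 0))).mp
    (by simpa [hχ] using (hμ.2 0 0).symm)

section OrthogonalSum

variable {A A' : Type*} [AddCommGroup A] [AddCommGroup A']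

def orthogonalSum (χ : A → A → ℂ) (χ' : A' → A' → ℂ) : A × A' → A × A' → ℂ :=
  fun p q => χ p.1 q.1 * χ' p.2 q.2

/-- The external product `μ ⊗ μ'`. -/
def tensorFun (μ : A → ℂ) (μ' : A' → ℂ) : A × A' → ℂ :=
  fun p => μ p.1 * μ' p.2

lemma tensorFun_injOn :
    Set.InjOn (fun q : (A → ℂ) × (A' → ℂ) => tensorFun q.1 q.2)
      {q | q.1 0 = 1 ∧ q.2 0 = 1} := by
  rintro ⟨μ, μ'⟩ ⟨hμ, hμ'⟩ ⟨ν, ν'⟩ ⟨hν, hν'⟩ h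
  have h₁ (a : A) := congrFun h (a, 0)
  have h₂ (a' : A') := congrFun h (0, a')
  simp only [tensorFun] at h₁ h₂ hμ hμ' hν hν'
  simp only [hμ, hμ', hν, hν', mul_one, one_mul] at h₁ h₂
  exact Prod.ext (funext h₁) (funext h₂)

lemma card_nsmul_eq_zero_prod (k : ℕ) :
    Nat.card {p : A × A' // k • p = 0} =
      Nat.card {a : A // k • a = 0} * Nat.card {a' : A' // k • a' = 0} := by
  rw [← Nat.card_prod]
  exact Nat.card_congr
    ((Equiv.subtypeEquivRight fun p => by simp [Prod.ext_iff]).trans Equiv.subtypeProdEquivProd)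

variable [Fintype A] [Fintype A']

lemma tensorFun_mem_quadMaps {χ : A → A → ℂ} {χ' : A' → A' → ℂ} {μ : A → ℂ} {μ' : A' → ℂ}
    (hμ : μ ∈ QuadMaps χ) (hμ' : μ' ∈ QuadMaps χ') :
    tensorFun μ μ' ∈ QuadMaps (orthogonalSum χ χ') := by
  refine ⟨fun p => by simp [tensorFun, hμ.1, hμ'.1], fun p q => ?_⟩
  simp only [tensorFun, orthogonalSum, Prod.fst_add, Prod.snd_add, hμ.2, hμ'.2]
  ring

lemma quadMaps_orthogonalSum {χ : A → A → ℂ} {χ' : A' → A' → ℂ}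
    (hχ : IsBicharacter χ) (hχ' : IsBicharacter χ') :
    QuadMaps (orthogonalSum χ χ') =
      (fun q => tensorFun q.1 q.2) '' (QuadMaps χ ×ˢ QuadMaps χ') := by
  refine Set.Subset.antisymm (fun μ hμ => ?_) ?_
  · refine ⟨(fun a => μ (a, 0), fun a' => μ (0, a')), ⟨⟨fun a => hμ.1 _, fun a b => ?_⟩,
      ⟨fun a' => hμ.1 _, fun a' b' => ?_⟩⟩, funext fun p => ?_⟩
    · simpa [orthogonalSum, hχ'.map_zero_left] using hμ.2 (a, 0) (b, 0)
    · simpa [orthogonalSum, hχ.map_zero_left] using hμ.2 (0, a') (0, b')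
    · simpa [orthogonalSum, tensorFun, hχ.map_zero_right, hχ'.map_zero_left] using
        (hμ.2 (p.1, 0) (0, p.2)).symm
  · rintro _ ⟨⟨μ, μ'⟩, ⟨hμ, hμ'⟩, rfl⟩
    exact tensorFun_mem_quadMaps hμ hμ'

lemma gaussSum'_tensorFun (μ : A → ℂ) (μ' : A' → ℂ) :
    gaussSum' (tensorFun μ μ') = gaussSum' μ * gaussSum' μ' := by
  simp only [gaussSum', Fintype.card_prod, inv_sqrt_natCast_mul, tensorFun,
    Fintype.sum_prod_type, ← Finset.sum_mul_sum]
  ring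

lemma finsum_quadMaps_orthogonalSum {χ : A → A → ℂ} {χ' : A' → A' → ℂ}
    (hχ : IsBicharacter χ) (hχ' : IsBicharacter χ') (k : ℕ) :
    ∑ᶠ μ ∈ QuadMaps (orthogonalSum χ χ'), gaussSum' μ ^ k =
      (∑ᶠ μ ∈ QuadMaps χ, gaussSum' μ ^ k) * ∑ᶠ μ' ∈ QuadMaps χ', gaussSum' μ' ^ k := by
  have hinj : Set.InjOn (fun q : (A → ℂ) × (A' → ℂ) => tensorFun q.1 q.2)
      (QuadMaps χ ×ˢ QuadMaps χ') := tensorFun_injOn.mono fun q hq =>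
    show q.1 0 = 1 ∧ q.2 0 = 1 from ⟨QuadMaps.apply_zero (hχ.map_zero_left 0) hq.1,
      QuadMaps.apply_zero (hχ'.map_zero_left 0) hq.2⟩
  rw [quadMaps_orthogonalSum hχ hχ', finsum_mem_image hinj, ← finsum_mem_prod_mul
    hχ.quadMaps_finite hχ'.quadMaps_finite]
  simp only [gaussSum'_tensorFun, mul_pow]

end OrthogonalSum

theorem zeta_multiplicative_general
    {A A' : Type*} [AddCommGroup A] [Fintype A] [AddCommGroup A'] [Fintype A']
    (χ : A → A → ℂ) (hχ : IsBicharacter χ)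
    (χ' : A' → A' → ℂ) (hχ' : IsBicharacter χ')
    (k : ℕ) :
    zeta (fun p q : A × A' => χ p.1 q.1 * χ' p.2 q.2) k = zeta χ k * zeta χ' k := by
  change zeta (orthogonalSum χ χ') k = _
  rw [zeta, zeta, zeta, finsum_quadMaps_orthogonalSum hχ hχ', Fintype.card_prod,
    card_nsmul_eq_zero_prod, inv_sqrt_natCast_mul, inv_sqrt_natCast_mul]
  ring

/-- `ζ_k` is multiplicative under orthogonal sum of bicharacter pairs:
`ζ_k(χ ⊕ χ') = ζ_k(χ) · ζ_k(χ')` for all `k ≥ 1`, where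
`(χ ⊕ χ')((a,a'),(b,b')) = χ(a,b)·χ'(a',b')` on `A × A'`. -/
theorem zeta_multiplicative
    {A A' : Type*} [AddCommGroup A] [Fintype A] [AddCommGroup A'] [Fintype A']
    (χ : A → A → ℂ) (hχ : IsBicharacter χ)
    (χ' : A' → A' → ℂ) (hχ' : IsBicharacter χ')
    (k : ℕ) (hk : 1 ≤ k) :
    zeta (fun p q : A × A' => χ p.1 q.1 * χ' p.2 q.2) k = zeta χ k * zeta χ' k :=
  zeta_multiplicative_general χ hχ χ' hχ' k
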